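/- The Logarithmic Least Squares problem min over positive w of Σ_{i,j} (ln a_ij − ln(w_i/w_j))² for an n×n PCM A is solved (uniquely up to scalar multiplication) by the geometric mean vector w_i = (∏_{j=1}^n a_ij)^{1/n}. -/

import Mathlib

/-!
Write `L i j = log (A i j)`, which is skew-symmetric by reciprocity, and `x = log w`. The objective
is `∑ i, ∑ j, (L i j - (x i - x j))²`. For the row means `m i = (∑ j, L i j) / n` the residual
`r i j = L i j - (m i - m j)` has vanishing row and column sums (this is where skew-symmetry enters),
so the cross term against any `y i - y j` vanishes and the objective at `x = m + y` equals its value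
at `m` plus `∑ i, ∑ j, (y i - y j)²`. Since `log g = m`, the geometric mean is optimal, and
equality forces `y` to be constant, i.e. `w` is a positive multiple of `g`.
-/

open Finset Real

section LeastSquares

variable {ι : Type*} [Fintype ι]

theorem sum_sum_mul_sub_eq_zero {r : ι → ι → ℝ} (hrow : ∀ i, ∑ j, r i j = 0)
    (hcol : ∀ j, ∑ i, r i j = 0) (y : ι → ℝ) :
    ∑ i, ∑ j, r i j * (y i - y j) = 0 := by
  have hy_row : ∑ i, ∑ j, r i j * y i = 0 := by simp [← sum_mul, hrow]
  have hy_col : ∑ i, ∑ j, r i j * y j = 0 := by rw [sum_comm]; simp [← sum_mul, hcol]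
  simp only [mul_sub, sum_sub_distrib, hy_row, hy_col, sub_zero]

theorem sum_sum_sub_sub_sq {r : ι → ι → ℝ} (hrow : ∀ i, ∑ j, r i j = 0)
    (hcol : ∀ j, ∑ i, r i j = 0) (y : ι → ℝ) :
    ∑ i, ∑ j, (r i j - (y i - y j)) ^ 2 =
      ∑ i, ∑ j, r i j ^ 2 + ∑ i, ∑ j, (y i - y j) ^ 2 := by
  have hexpand : ∀ i j, (r i j - (y i - y j)) ^ 2 =
      r i j ^ 2 + (y i - y j) ^ 2 - 2 * (r i j * (y i - y j)) := fun _ _ => by ring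
  simp only [hexpand, sum_sub_distrib, sum_add_distrib, ← mul_sum,
    sum_sum_mul_sub_eq_zero hrow hcol y, mul_zero, sub_zero]

theorem exists_forall_eq_of_sum_sum_sub_sq_eq_zero {y : ι → ℝ}
    (h : ∑ i, ∑ j, (y i - y j) ^ 2 = 0) : ∃ c, ∀ i, y i = c := by
  rcases isEmpty_or_nonempty ι with hι | ⟨⟨i₀⟩⟩
  · exact ⟨0, isEmptyElim⟩
  refine ⟨y i₀, fun i => ?_⟩
  have hrow := (sum_eq_zero_iff_of_nonneg fun i _ => sum_nonneg fun j _ =>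
    sq_nonneg (y i - y j)).1 h i (mem_univ i)
  have hsq := (sum_eq_zero_iff_of_nonneg fun j _ => sq_nonneg (y i - y j)).1 hrow i₀ (mem_univ i₀)
  exact sub_eq_zero.1 (pow_eq_zero_iff two_ne_zero |>.1 hsq)

noncomputable def rowMean (L : ι → ι → ℝ) (i : ι) : ℝ :=
  (∑ j, L i j) / Fintype.card ι

variable {L : ι → ι → ℝ}

theorem card_mul_rowMean (L : ι → ι → ℝ) (i : ι) :
    (Fintype.card ι : ℝ) * rowMean L i = ∑ j, L i j := by
  have : Nonempty ι := ⟨i⟩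
  have hcard : (Fintype.card ι : ℝ) ≠ 0 := Nat.cast_ne_zero.2 Fintype.card_ne_zero
  rw [rowMean, mul_div_cancel₀ _ hcard]

theorem sum_sum_eq_zero_of_skew (hL : ∀ i j, L j i = -L i j) : ∑ i, ∑ j, L i j = 0 := by
  have h : ∑ i, ∑ j, L i j = -∑ i, ∑ j, L i j := by
    calc ∑ i, ∑ j, L i j = ∑ j, ∑ i, L i j := sum_comm
      _ = ∑ j, ∑ i, -L j i := sum_congr rfl fun j _ => sum_congr rfl fun i _ => hL j i
      _ = -∑ i, ∑ j, L i j := by simp only [sum_neg_distrib]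
  linarith

theorem sum_rowMean_eq_zero (hL : ∀ i j, L j i = -L i j) : ∑ i, rowMean L i = 0 := by
  simp only [rowMean, ← sum_div, sum_sum_eq_zero_of_skew hL, zero_div]

theorem sum_sub_rowMean_row (hL : ∀ i j, L j i = -L i j) (i : ι) :
    ∑ j, (L i j - (rowMean L i - rowMean L j)) = 0 := by
  rw [sum_sub_distrib, sum_sub_distrib, sum_rowMean_eq_zero hL, sum_const, card_univ,
    nsmul_eq_mul, card_mul_rowMean]
  ring

theorem sum_sub_rowMean_col (hL : ∀ i j, L j i = -L i j) (j : ι) :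
    ∑ i, (L i j - (rowMean L i - rowMean L j)) = 0 := by
  rw [sum_sub_distrib, sum_sub_distrib, sum_rowMean_eq_zero hL, sum_const, card_univ,
    nsmul_eq_mul, sum_congr rfl fun i _ => hL j i, sum_neg_distrib, ← card_mul_rowMean]
  ring

theorem sum_sum_sub_sub_sq_eq_rowMean_add (hL : ∀ i j, L j i = -L i j) (x : ι → ℝ) :
    ∑ i, ∑ j, (L i j - (x i - x j)) ^ 2 =
      ∑ i, ∑ j, (L i j - (rowMean L i - rowMean L j)) ^ 2 +
        ∑ i, ∑ j, ((x i - rowMean L i) - (x j - rowMean L j)) ^ 2 := by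
  have hshift : ∀ i j, L i j - (rowMean L i - rowMean L j) -
      ((x i - rowMean L i) - (x j - rowMean L j)) = L i j - (x i - x j) := fun _ _ => by ring
  simpa only [hshift] using sum_sum_sub_sub_sq (sum_sub_rowMean_row hL)
    (sum_sub_rowMean_col hL) (fun i => x i - rowMean L i)

end LeastSquares

theorem llsm_geometric_mean_optimal_general (n : ℕ)
    (A : Matrix (Fin n) (Fin n) ℝ)
    (hpos : ∀ i j, 0 < A i j) (hrec : ∀ i j, A j i = 1 / A i j)
    (g : Fin n → ℝ) (hg : ∀ i, g i = (∏ j, A i j) ^ ((1 : ℝ) / n)) :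
    (∀ w : Fin n → ℝ, (∀ i, 0 < w i) →
      (∑ i, ∑ j, (Real.log (A i j) - Real.log (g i / g j)) ^ 2) ≤
        ∑ i, ∑ j, (Real.log (A i j) - Real.log (w i / w j)) ^ 2) ∧
    (∀ w : Fin n → ℝ, (∀ i, 0 < w i) →
      (∑ i, ∑ j, (Real.log (A i j) - Real.log (w i / w j)) ^ 2) =
        (∑ i, ∑ j, (Real.log (A i j) - Real.log (g i / g j)) ^ 2) →
      ∃ c : ℝ, 0 < c ∧ ∀ i, w i = c * g i) := by
  set L : Fin n → Fin n → ℝ := fun i j => log (A i j)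
  have hL : ∀ i j, L j i = -L i j := fun i j => by
    rw [show L j i = log (A j i) from rfl, hrec, one_div, log_inv]
  have hg_pos : ∀ i, 0 < g i := fun i => hg i ▸ rpow_pos_of_pos (prod_pos fun j _ => hpos i j) _
  have hlog_g : ∀ i, log (g i) = rowMean L i := fun i => by
    rw [hg, log_rpow (prod_pos fun j _ => hpos i j), log_prod fun j _ => (hpos i j).ne', rowMean,
      Fintype.card_fin, one_div_mul_eq_div]
  have hobj : ∀ w : Fin n → ℝ, (∀ i, 0 < w i) →
      ∑ i, ∑ j, (log (A i j) - log (w i / w j)) ^ 2 =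
        ∑ i, ∑ j, (L i j - (rowMean L i - rowMean L j)) ^ 2 +
          ∑ i, ∑ j, ((log (w i) - rowMean L i) - (log (w j) - rowMean L j)) ^ 2 :=
    fun w hw => by
      simp only [log_div (hw _).ne' (hw _).ne']
      exact sum_sum_sub_sub_sq_eq_rowMean_add hL _
  have hobj_g : ∑ i, ∑ j, (log (A i j) - log (g i / g j)) ^ 2 =
      ∑ i, ∑ j, (L i j - (rowMean L i - rowMean L j)) ^ 2 := by
    simp [hobj g hg_pos, hlog_g]
  refine ⟨fun w hw => ?_, fun w hw heq => ?_⟩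
  · rw [hobj w hw, hobj_g]
    exact le_add_of_nonneg_right (by positivity)
  · rw [hobj w hw, hobj_g, add_eq_left] at heq
    obtain ⟨c, hc⟩ := exists_forall_eq_of_sum_sum_sub_sq_eq_zero heq
    refine ⟨exp c, exp_pos c, fun i => ?_⟩
    rw [← exp_log (hw i), ← exp_log (hg_pos i), ← exp_add, hlog_g, ← hc i]
    ring_nf

theorem llsm_geometric_mean_optimal (n : ℕ) (hn : 0 < n)
    (A : Matrix (Fin n) (Fin n) ℝ)
    (hpos : ∀ i j, 0 < A i j) (hrec : ∀ i j, A j i = 1 / A i j)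
    (g : Fin n → ℝ) (hg : ∀ i, g i = (∏ j, A i j) ^ ((1 : ℝ) / n)) :
    (∀ w : Fin n → ℝ, (∀ i, 0 < w i) →
      (∑ i, ∑ j, (Real.log (A i j) - Real.log (g i / g j)) ^ 2) ≤
        ∑ i, ∑ j, (Real.log (A i j) - Real.log (w i / w j)) ^ 2) ∧
    (∀ w : Fin n → ℝ, (∀ i, 0 < w i) →
      (∑ i, ∑ j, (Real.log (A i j) - Real.log (w i / w j)) ^ 2) =
        (∑ i, ∑ j, (Real.log (A i j) - Real.log (g i / g j)) ^ 2) →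
      ∃ c : ℝ, 0 < c ∧ ∀ i, w i = c * g i) :=
  llsm_geometric_mean_optimal_general n A hpos hrec g hg
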